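/- Fix β > 0, b₂ ∈ ℝ, α₂, α₃ ∈ (0,1), and let Q₁(p₁) be the convex increasing function defined implicitly by p₁ = α₁ E_{b₁}[tanh²(βη√Q₁)]. Then z(p₁) := α₂ E_{b₂,1}[tanh²(βη√(p₁ + α₃))] / Q₁(p₁) is strictly decreasing in p₁ on its domain. -/

import Mathlib

/-!
Write `T(σ) = E[tanh²(b + βη√σ)] = G(β√σ)` with `G(s) = E[tanh²(b + sη)]`. The Guerra–Latala
lemma says that `T(σ)/σ`, i.e. `G(s)/s²`, is nonincreasing. Its derivative has the sign of
`s G'(s) - 2 G(s) = E[D(Y)(Y - b)] - 2 E[tanh² Y]`, where `Y = b + sη` and `D = (tanh²)'`.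
Pointwise `y D(y) ≤ 2 tanh² y`, and `b E[D(Y)] ≥ 0` because `D` is odd with the sign of its
argument while the law of `Y` is symmetric about `b`.

Then `z(p) = α₂ · T(p + α₃)/(p + α₃) · (p + α₃)/Q₁(p)`: the first ratio is positive and
nonincreasing, and the second strictly decreases because `p/Q₁(p)` decreases and `Q₁` increases.
-/

open MeasureTheory ProbabilityTheory Real Set

/-- `E_{0,1}[tanh²(b + βη√σ)]`. -/
noncomputable def tanhSq (b β Q : ℝ) : ℝ :=
  ∫ η, Real.tanh (b + β * η * Real.sqrt Q) ^ 2 ∂(gaussianReal 0 1)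

open scoped NNReal

namespace Real

lemma hasDerivAt_tanh (y : ℝ) : HasDerivAt tanh (1 - tanh y ^ 2) y := by
  refine (((hasDerivAt_sinh y).div (hasDerivAt_cosh y) (cosh_pos y).ne').congr_of_eventuallyEq
    (.of_forall tanh_eq_sinh_div_cosh)).congr_deriv ?_
  rw [tanh_eq_sinh_div_cosh]
  field_simp

@[fun_prop]
lemma continuous_tanh : Continuous tanh :=
  continuous_iff_continuousAt.2 fun y => (hasDerivAt_tanh y).continuousAt

lemma tanh_nonneg {y : ℝ} (hy : 0 ≤ y) : 0 ≤ tanh y := by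
  rw [tanh_eq_sinh_div_cosh]
  exact div_nonneg (sinh_nonneg_iff.2 hy) (cosh_pos y).le

lemma tanh_eq_zero_iff {y : ℝ} : tanh y = 0 ↔ y = 0 := by
  simp [tanh_eq_sinh_div_cosh, (cosh_pos y).ne']

/-- `1 - tanh² y = 1 / cosh² y` turns this into `2y ≤ sinh 2y`. -/
lemma mul_one_sub_tanh_sq_le_tanh {y : ℝ} (hy : 0 ≤ y) : y * (1 - tanh y ^ 2) ≤ tanh y := by
  have hsinh : 2 * y ≤ 2 * sinh y * cosh y := sinh_two_mul y ▸ self_le_sinh_iff.2 (by linarith)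
  have hc := cosh_pos y
  rw [tanh_eq_sinh_div_cosh, div_pow, one_sub_div (by positivity), cosh_sq, add_sub_cancel_left,
    mul_one_div, div_le_div_iff₀ (by positivity) hc]
  nlinarith [cosh_sq y, mul_le_mul_of_nonneg_right hsinh hc.le]

lemma one_sub_tanh_sq_pos (y : ℝ) : 0 < 1 - tanh y ^ 2 := by
  linarith [tanh_sq_lt_one y]

end Real

noncomputable def tanhSqDeriv (y : ℝ) : ℝ := 2 * tanh y * (1 - tanh y ^ 2)

lemma hasDerivAt_tanh_sq (y : ℝ) : HasDerivAt (fun y => tanh y ^ 2) (tanhSqDeriv y) y := by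
  refine ((hasDerivAt_pow 2 (tanh y)).comp y (hasDerivAt_tanh y)).congr_deriv ?_
  simp [tanhSqDeriv]

@[fun_prop]
lemma continuous_tanhSqDeriv : Continuous tanhSqDeriv := by
  unfold tanhSqDeriv; fun_prop

lemma tanhSqDeriv_neg (y : ℝ) : tanhSqDeriv (-y) = -tanhSqDeriv y := by
  simp [tanhSqDeriv, tanh_neg]

lemma mul_tanhSqDeriv_nonneg (y : ℝ) : 0 ≤ y * tanhSqDeriv y := by
  have h : 0 ≤ y * tanh y := by
    rcases le_total 0 y with hy | hy
    · exact mul_nonneg hy (tanh_nonneg hy)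
    · simpa [tanh_neg] using mul_nonneg (neg_nonneg.2 hy) (tanh_nonneg (neg_nonneg.2 hy))
  have := one_sub_tanh_sq_pos y
  unfold tanhSqDeriv
  nlinarith

lemma mul_tanhSqDeriv_le (y : ℝ) : y * tanhSqDeriv y ≤ 2 * tanh y ^ 2 := by
  wlog hy : 0 ≤ y generalizing y
  · simpa [tanhSqDeriv_neg, tanh_neg] using this (-y) (by linarith)
  have := mul_one_sub_tanh_sq_le_tanh hy
  have := tanh_nonneg hy
  unfold tanhSqDeriv
  nlinarith

lemma abs_tanhSqDeriv_le (y : ℝ) : |tanhSqDeriv y| ≤ 2 := by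
  have h1 := abs_tanh_lt_one y
  have h2 := one_sub_tanh_sq_pos y
  rw [tanhSqDeriv, abs_mul, abs_mul, abs_two, abs_of_pos h2]
  nlinarith [abs_nonneg (tanh y), sq_nonneg (tanh y)]

lemma integral_gaussianReal_comp_affine {f : ℝ → ℝ} (b s : ℝ)
    (hf : AEStronglyMeasurable f (gaussianReal b (s ^ 2).toNNReal)) :
    ∫ η, f (b + s * η) ∂gaussianReal 0 1 = ∫ y, f y ∂gaussianReal b (s ^ 2).toNNReal := by
  have hmap : (gaussianReal 0 1).map (fun η => b + s * η) = gaussianReal b (s ^ 2).toNNReal := by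
    rw [show (fun η => b + s * η) = (b + ·) ∘ (s * ·) from rfl,
      ← Measure.map_map (by fun_prop) (by fun_prop), gaussianReal_map_const_mul,
      gaussianReal_map_const_add]
    congr 1
    · ring
    · ext
      simp [sq_nonneg]
  rw [← hmap] at hf ⊢
  exact (integral_map (by fun_prop) hf).symm

lemma mul_sub_gaussianPDFReal_neg_nonneg (b : ℝ) (v : ℝ≥0) (y : ℝ) :
    0 ≤ b * y * (gaussianPDFReal b v y - gaussianPDFReal b v (-y)) := by
  simp only [gaussianPDFReal]
  rcases le_total 0 (b * y) with h | h
  · refine mul_nonneg h (sub_nonneg.2 ?_)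
    gcongr _ * rexp (-?_ / _)
    nlinarith
  · refine mul_nonneg_of_nonpos_of_nonpos h (sub_nonpos.2 ?_)
    gcongr _ * rexp (-?_ / _)
    nlinarith

/-- Pairing `y` with `-y`: the Gaussian density centred at `b` is larger at whichever of the two
points lies on the side of `b`, and there `ψ` has the sign of `b`. -/
lemma mul_integral_gaussianReal_nonneg_of_odd {ψ : ℝ → ℝ} (hodd : ∀ y, ψ (-y) = -ψ y)
    (hsign : ∀ y, 0 ≤ y * ψ y) (b : ℝ) (v : ℝ≥0) :
    0 ≤ b * ∫ y, ψ y ∂gaussianReal b v := by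
  rcases eq_or_ne v 0 with rfl | hv
  · simpa [gaussianReal_zero_var] using hsign b
  rw [integral_gaussianReal_eq_integral_smul hv]
  set g : ℝ → ℝ := fun y => gaussianPDFReal b v y • ψ y
  by_cases hg : Integrable g
  swap
  · simp [integral_undef hg]
  have hpair : ∀ y, 0 ≤ b * (g y + g (-y)) := by
    intro y
    have hpair_eq : b * (g y + g (-y))
        = b * ψ y * (gaussianPDFReal b v y - gaussianPDFReal b v (-y)) := by
      simp only [g, smul_eq_mul, hodd]; ring
    have hy_sq : 0 ≤ y ^ 2 * (b * (g y + g (-y))) := by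
      rw [hpair_eq]
      nlinarith [mul_nonneg (mul_sub_gaussianPDFReal_neg_nonneg b v y) (hsign y)]
    rcases eq_or_ne y 0 with rfl | hy
    · rw [hpair_eq]; simp
    · exact (mul_nonneg_iff_of_pos_left (by positivity)).1 hy_sq
  have hsym : 2 * (b * ∫ y, g y) = ∫ y, b * (g y + g (-y)) := by
    rw [integral_const_mul, integral_add hg hg.comp_neg, integral_neg_eq_self]
    ring
  have hint : 0 ≤ ∫ y, b * (g y + g (-y)) := integral_nonneg hpair
  linarith

noncomputable def gaussianTanhSq (b s : ℝ) : ℝ :=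
  ∫ η, tanh (b + s * η) ^ 2 ∂gaussianReal 0 1

lemma integrable_tanh_sq_comp {μ : Measure ℝ} [IsFiniteMeasure μ] {f : ℝ → ℝ}
    (hf : Continuous f) : Integrable (fun x => tanh (f x) ^ 2) μ :=
  .of_bound (by fun_prop) 1 (.of_forall fun x => by
    rw [norm_pow, Real.norm_eq_abs, sq_abs]
    exact (tanh_sq_lt_one (f x)).le)

lemma integrable_tanhSqDeriv_comp {μ : Measure ℝ} [IsFiniteMeasure μ] {f : ℝ → ℝ}
    (hf : Continuous f) : Integrable (fun x => tanhSqDeriv (f x)) μ :=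
  .of_bound (continuous_tanhSqDeriv.comp hf).aestronglyMeasurable 2
    (.of_forall fun x => abs_tanhSqDeriv_le (f x))

lemma hasDerivAt_gaussianTanhSq (b s : ℝ) :
    HasDerivAt (gaussianTanhSq b) (∫ η, tanhSqDeriv (b + s * η) * η ∂gaussianReal 0 1) s :=
  (hasDerivAt_integral_of_dominated_loc_of_deriv_le (s := univ) (bound := fun η => 2 * |η|)
    (F' := fun s η => tanhSqDeriv (b + s * η) * η) Filter.univ_mem
    (.of_forall fun _ => (by fun_prop : Continuous _).aestronglyMeasurable)
    (integrable_tanh_sq_comp (by fun_prop))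
    ((continuous_tanhSqDeriv.comp (by fun_prop)).mul continuous_id).aestronglyMeasurable
    (.of_forall fun η _ _ => by
      rw [norm_mul, Real.norm_eq_abs, Real.norm_eq_abs]
      exact mul_le_mul_of_nonneg_right (abs_tanhSqDeriv_le _) (abs_nonneg η))
    ((IsGaussian.integrable_id (μ := gaussianReal 0 1)).abs.const_mul 2)
    (.of_forall fun η s _ =>
      (hasDerivAt_tanh_sq _).comp s ((hasDerivAt_mul_const η).const_add b))).2

lemma mul_deriv_gaussianTanhSq_le (b s : ℝ) :
    s * ∫ η, tanhSqDeriv (b + s * η) * η ∂gaussianReal 0 1 ≤ 2 * gaussianTanhSq b s := by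
  have hY : Continuous fun η : ℝ => b + s * η := by fun_prop
  have hYD : Integrable (fun η => (b + s * η) * tanhSqDeriv (b + s * η)) (gaussianReal 0 1) :=
    .of_bound (hY.mul (continuous_tanhSqDeriv.comp hY)).aestronglyMeasurable 2
      (.of_forall fun η => by
        rw [Real.norm_eq_abs, abs_of_nonneg (mul_tanhSqDeriv_nonneg _)]
        linarith [mul_tanhSqDeriv_le (b + s * η), tanh_sq_lt_one (b + s * η)])
  have hD := integrable_tanhSqDeriv_comp (μ := gaussianReal 0 1) hY
  have hsplit : s * ∫ η, tanhSqDeriv (b + s * η) * η ∂gaussianReal 0 1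
      = (∫ η, (b + s * η) * tanhSqDeriv (b + s * η) ∂gaussianReal 0 1)
        - b * ∫ η, tanhSqDeriv (b + s * η) ∂gaussianReal 0 1 := by
    rw [← integral_const_mul, ← integral_const_mul, ← integral_sub hYD (hD.const_mul b)]
    congr 1 with η
    ring
  have hmain : ∫ η, (b + s * η) * tanhSqDeriv (b + s * η) ∂gaussianReal 0 1
      ≤ 2 * gaussianTanhSq b s := by
    rw [gaussianTanhSq, ← integral_const_mul]
    exact integral_mono hYD ((integrable_tanh_sq_comp hY).const_mul 2)
      fun η => mul_tanhSqDeriv_le _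
  have hsign : 0 ≤ b * ∫ η, tanhSqDeriv (b + s * η) ∂gaussianReal 0 1 := by
    rw [integral_gaussianReal_comp_affine b s continuous_tanhSqDeriv.aestronglyMeasurable]
    exact mul_integral_gaussianReal_nonneg_of_odd tanhSqDeriv_neg mul_tanhSqDeriv_nonneg b _
  linarith

lemma antitoneOn_gaussianTanhSq_div_sq (b : ℝ) :
    AntitoneOn (fun s => gaussianTanhSq b s / s ^ 2) (Ioi 0) := by
  have hderiv : ∀ s ∈ Ioi (0 : ℝ), HasDerivAt (fun s => gaussianTanhSq b s / s ^ 2)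
      (((∫ η, tanhSqDeriv (b + s * η) * η ∂gaussianReal 0 1) * s ^ 2
        - gaussianTanhSq b s * (2 * s)) / (s ^ 2) ^ 2) s := fun s hs => by
    have hs : 0 < s := hs
    exact ((hasDerivAt_gaussianTanhSq b s).fun_div (hasDerivAt_pow 2 s)
      (by positivity)).congr_deriv (by simp)
  refine antitoneOn_of_deriv_nonpos (convex_Ioi 0)
    (fun s hs => (hderiv s hs).continuousAt.continuousWithinAt)
    (fun s hs => (hderiv s (interior_subset hs)).differentiableAt.differentiableWithinAt)
    fun s hs => ?_
  rw [interior_Ioi] at hs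
  rw [(hderiv s hs).deriv]
  have := mul_deriv_gaussianTanhSq_le b s
  have hs : 0 < s := hs
  apply div_nonpos_of_nonpos_of_nonneg _ (by positivity)
  nlinarith

lemma tanhSq_eq_gaussianTanhSq (b β σ : ℝ) : tanhSq b β σ = gaussianTanhSq b (β * √σ) := by
  simp only [tanhSq, gaussianTanhSq, mul_right_comm β]

lemma antitoneOn_tanhSq_div (b : ℝ) {β : ℝ} (hβ : 0 < β) :
    AntitoneOn (fun σ => tanhSq b β σ / σ) (Ioi 0) := by
  intro σ hσ τ hτ hστ
  have hσ : 0 < σ := hσ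
  have hτ : 0 < τ := hτ
  have h := antitoneOn_gaussianTanhSq_div_sq b (by positivity : (0 : ℝ) < β * √σ)
    (by positivity : (0 : ℝ) < β * √τ) (by gcongr)
  simp only [mul_pow, sq_sqrt hσ.le, sq_sqrt hτ.le, mul_comm (β ^ 2), ← div_div] at h
  simpa only [tanhSq_eq_gaussianTanhSq] using (div_le_div_iff_of_pos_right (by positivity)).1 h

lemma tanhSq_pos (b : ℝ) {β σ : ℝ} (hβ : β ≠ 0) (hσ : 0 < σ) : 0 < tanhSq b β σ := by
  have hv : ((β * √σ) ^ 2).toNNReal ≠ 0 := by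
    simp [hβ, (sqrt_pos.2 hσ).ne']
  have := nullSingletonClass_gaussianReal (μ := b) hv
  rw [tanhSq_eq_gaussianTanhSq, gaussianTanhSq,
    integral_gaussianReal_comp_affine (f := fun y => tanh y ^ 2) b _
      (by fun_prop : Continuous _).aestronglyMeasurable,
    integral_pos_iff_support_of_nonneg (f := fun y => tanh y ^ 2) (fun _ => sq_nonneg _)
      (integrable_tanh_sq_comp continuous_id)]
  have hsupp : Function.support (fun y => tanh y ^ 2) = {0}ᶜ := by
    ext y
    simp [tanh_eq_zero_iff]
  rw [hsupp, measure_compl (measurableSet_singleton 0) (measure_ne_top _ _), measure_singleton]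
  simp

theorem z_strictAnti_general
    (β b₂ α₂ α₃ : ℝ) (hβ : 0 < β)
    (hα₂ : α₂ ∈ Set.Ioo (0:ℝ) 1) (hα₃ : α₃ ∈ Set.Ioo (0:ℝ) 1)
    (S : Set ℝ) (hS : S ⊆ Ioi 0)
    (Q₁ : ℝ → ℝ)
    (hQpos : ∀ p ∈ S, 0 < Q₁ p)
    (hQmono : StrictMonoOn Q₁ S)
    (hQconv : StrictMonoOn (fun p => Q₁ p / p) S) :
    StrictAntiOn (fun p => α₂ * tanhSq b₂ β (p + α₃) / Q₁ p) S := by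
  intro p hp q hq hpq
  have hp0 : 0 < p := hS hp
  have hq0 : 0 < q := hS hq
  have hα₃0 : 0 < α₃ := hα₃.1
  have hQp := hQpos p hp
  have hQq := hQpos q hq
  have hT := tanhSq_pos b₂ hβ.ne' (by positivity : 0 < p + α₃)
  have hGL : tanhSq b₂ β (q + α₃) / (q + α₃) ≤ tanhSq b₂ β (p + α₃) / (p + α₃) :=
    antitoneOn_tanhSq_div b₂ hβ (by simp; positivity) (by simp; positivity) (by linarith)
  have hratio : q / Q₁ q < p / Q₁ p := by
    have := hQconv hp hq hpq
    simp only at this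
    rw [div_lt_div_iff₀ hQq hQp]
    rw [div_lt_div_iff₀ hp0 hq0] at this
    linarith
  have hshift : (q + α₃) / Q₁ q < (p + α₃) / Q₁ p := by
    rw [add_div, add_div]
    gcongr
    exact hQmono hp hq hpq
  simp only [mul_div_assoc]
  refine mul_lt_mul_of_pos_left ?_ hα₂.1
  calc tanhSq b₂ β (q + α₃) / Q₁ q
      = tanhSq b₂ β (q + α₃) / (q + α₃) * ((q + α₃) / Q₁ q) := by field_simp
    _ ≤ tanhSq b₂ β (p + α₃) / (p + α₃) * ((q + α₃) / Q₁ q) := by gcongr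
    _ < tanhSq b₂ β (p + α₃) / (p + α₃) * ((p + α₃) / Q₁ p) := by gcongr
    _ = tanhSq b₂ β (p + α₃) / Q₁ p := by field_simp

/-- with `Q₁(p₁)` the convex increasing function defined
implicitly by `p₁ = α₁ E_{b₁}[tanh²(βη√Q₁)]`, the function
`z(p₁) = α₂ E_{b₂}[tanh²(βη√(p₁+α₃))]/Q₁(p₁)` is strictly decreasing. -/
theorem z_strictAnti
    (β b₁ b₂ α₁ α₂ α₃ : ℝ) (hβ : 0 < β)
    (hα₂ : α₂ ∈ Set.Ioo (0:ℝ) 1) (hα₃ : α₃ ∈ Set.Ioo (0:ℝ) 1)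
    (S : Set ℝ) (hS : S ⊆ Ioi 0)
    (Q₁ : ℝ → ℝ)
    (hQpos : ∀ p ∈ S, 0 < Q₁ p)
    (hQdiff : ∀ p ∈ S, DifferentiableAt ℝ Q₁ p)
    (himplicit : ∀ p ∈ S, p = α₁ * tanhSq b₁ β (Q₁ p))
    (hQmono : StrictMonoOn Q₁ S)
    (hQconv : StrictMonoOn (fun p => Q₁ p / p) S) :
    StrictAntiOn (fun p => α₂ * tanhSq b₂ β (p + α₃) / Q₁ p) S :=
  z_strictAnti_general β b₂ α₂ α₃ hβ hα₂ hα₃ S hS Q₁ hQpos hQmono hQconv
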